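/- arXiv:1012.5349 — 3 statements merged into one kernel-verified Lean document; each statement's English description precedes it below -/
import Mathlib

section
/- If f is in H^1 of the circle S = R/Z and has zero mean, i.e. ∫_S f(x) dx = 0, then max_{x∈S} f(x)^2 ≤ (1/12) ∫_S f_x(x)^2 dx. -/
/-!
Integrating by parts against the sawtooth kernel `x ↦ x - y - 1/2` on `[y, y + 1]` gives
`f y = ∫ f + ∫_y^{y+1} (x - y - 1/2) f'(x) dx`, since the boundary terms average `f y` and
`f (y + 1)`. For mean-zero `f`, Cauchy–Schwarz bounds `(f y)²` by `∫ f'²` times the squared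
`L²`-norm of the kernel, which is `∫_{-1/2}^{1/2} t² dt = 1/12`.
-/

open MeasureTheory intervalIntegral

theorem integral_mul_sq_le_integral_sq_mul_integral_sq {α : Type*} [MeasurableSpace α]
    {μ : Measure α} {u v : α → ℝ} (hu : Integrable (fun x => u x ^ 2) μ)
    (hv : Integrable (fun x => v x ^ 2) μ) (huv : Integrable (fun x => u x * v x) μ) :
    (∫ x, u x * v x ∂μ) ^ 2 ≤ (∫ x, u x ^ 2 ∂μ) * ∫ x, v x ^ 2 ∂μ := by
  have quadratic_nonneg : ∀ t : ℝ,
      0 ≤ (∫ x, u x ^ 2 ∂μ) * (t * t) + 2 * (∫ x, u x * v x ∂μ) * t + ∫ x, v x ^ 2 ∂μ := by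
    intro t
    have expand : ∫ x, (t * u x + v x) ^ 2 ∂μ =
        (∫ x, u x ^ 2 ∂μ) * (t * t) + 2 * (∫ x, u x * v x ∂μ) * t + ∫ x, v x ^ 2 ∂μ := by
      have hpt : ∀ x, (t * u x + v x) ^ 2 = t * t * u x ^ 2 + 2 * t * (u x * v x) + v x ^ 2 :=
        fun x => by ring
      simp only [hpt]
      rw [MeasureTheory.integral_add, MeasureTheory.integral_add,
        MeasureTheory.integral_const_mul, MeasureTheory.integral_const_mul]
      · ring
      all_goals fun_prop
    exact expand ▸ integral_nonneg fun x => sq_nonneg _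
  have := discrim_le_zero quadratic_nonneg
  rw [discrim] at this
  nlinarith

theorem Function.Periodic.periodic_of_hasDerivAt {E : Type*} [NormedAddCommGroup E]
    [NormedSpace ℝ E] {f f' : ℝ → E} {T : ℝ} (hf : Function.Periodic f T)
    (hderiv : ∀ x, HasDerivAt f (f' x) x) : Function.Periodic f' T := by
  intro x
  have hshift : HasDerivAt (fun t => f (t + T)) (f' (x + T)) x :=
    (hderiv (x + T)).comp_add_const x T
  rw [show (fun t => f (t + T)) = f from funext hf] at hshift
  exact hshift.unique (hderiv x)

theorem integral_sub_sub_half_sq (y : ℝ) :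
    ∫ x in y..y + 1, (x - y - 1 / 2) ^ 2 = 1 / 12 := by
  rw [integral_comp_sub_right (fun x => (x - 1 / 2) ^ 2), integral_comp_sub_right (· ^ 2)]
  norm_num [integral_pow]

theorem Function.Periodic.eq_integral_add_integral_sawtooth_mul_deriv {f f' : ℝ → ℝ}
    (hf : Function.Periodic f 1) (hderiv : ∀ x, HasDerivAt f (f' x) x) (y : ℝ)
    (hf' : IntervalIntegrable f' volume y (y + 1)) :
    f y = (∫ x in (0 : ℝ)..1, f x) + ∫ x in y..y + 1, (x - y - 1 / 2) * f' x := by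
  have hparts := integral_mul_deriv_eq_deriv_mul (u := fun x => x - y - 1 / 2)
    (fun x _ => ((hasDerivAt_id x).sub_const y).sub_const (1 / 2)) (fun x _ => hderiv x)
    intervalIntegrable_const hf'
  have hmean : ∫ x in y..y + 1, f x = ∫ x in (0 : ℝ)..1, f x := by
    simpa using hf.intervalIntegral_add_eq y 0
  simp only [one_mul, hmean, hf y] at hparts
  rw [hparts]
  ring

/-- If `f ∈ H¹(S)` on the circle `S = ℝ/ℤ` has zero mean over one period, then
`max_{x∈S} f(x)² ≤ (1/12) ∫_S f_x² dx`. -/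
theorem max_sq_le_twelfth_integral_deriv_sq
    (f f' : ℝ → ℝ)
    (hper : Function.Periodic f 1)
    (hderiv : ∀ x, HasDerivAt f (f' x) x)
    (hcont : Continuous f')
    (hmean : (∫ x in (0:ℝ)..1, f x) = 0) :
    ∀ x : ℝ, (f x) ^ 2 ≤ (1 / 12) * ∫ x in (0:ℝ)..1, (f' x) ^ 2 := by
  intro y
  have hrep := hper.eq_integral_add_integral_sawtooth_mul_deriv hderiv y
    (hcont.intervalIntegrable _ _)
  have hsq_mean : ∫ x in y..y + 1, f' x ^ 2 = ∫ x in (0 : ℝ)..1, f' x ^ 2 := by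
    have hsq : Function.Periodic (fun x => f' x ^ 2) 1 := fun x => by
      simp only [hper.periodic_of_hasDerivAt hderiv x]
    simpa using hsq.intervalIntegral_add_eq y 0
  have hle : y ≤ y + 1 := by linarith
  have hcs : (∫ x in y..y + 1, (x - y - 1 / 2) * f' x) ^ 2 ≤
      (∫ x in y..y + 1, (x - y - 1 / 2) ^ 2) * ∫ x in y..y + 1, f' x ^ 2 := by
    simp only [integral_of_le hle]
    exact integral_mul_sq_le_integral_sq_mul_integral_sq
      (Continuous.integrableOn_Ioc (by fun_prop)) (Continuous.integrableOn_Ioc (by fun_prop))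
      (Continuous.integrableOn_Ioc (by fun_prop))
  rw [hmean, zero_add] at hrep
  rwa [← hrep, integral_sub_sub_half_sq, hsq_mean] at hcs
end

section
/- Suppose α, M : [0,T) × ℝ → ℝ are C¹ in t, with ∂_t α = α M, ∂_t M = (1/2)M² − (1/2)α² + f where |f(t,x)| ≤ F for a constant F ≥ 0, and α(t,x)·α(0,x) > 0 for all (t,x). Define the Lyapunov function w(t,x) = α(t,x)α(0,x) + (α(0,x)/α(t,x))(1 + M(t,x)²). Then ∂_t w(t,x) = (α(0,x)/α(t,x)) · M(t,x) · (2f(t,x) − 1). -/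
/-! Since `∂ₜ(α₀/α) = -(α₀/α) M`, differentiating `w` produces the terms `± α α₀ M` and
`± (α₀/α) M³`, which cancel in pairs; what survives is `(α₀/α) M (2f - 1)`. -/

section LyapunovDerivative

variable {a m : ℝ → ℝ} {a' m' c t : ℝ}

theorem HasDerivAt.mul_const_add_div_mul_one_add_sq (ha : HasDerivAt a a' t)
    (hm : HasDerivAt m m' t) (hat : a t ≠ 0) :
    HasDerivAt (fun s => a s * c + c / a s * (1 + m s ^ 2))
      (a' * c - c * a' / a t ^ 2 * (1 + m t ^ 2) + c / a t * (2 * m t * m')) t := by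
  refine ((ha.mul_const c).add
    (((hasDerivAt_const t c).div ha hat).mul ((hm.pow 2).const_add 1))).congr_deriv ?_
  simp only [Pi.pow_apply, Pi.div_apply]
  ring

theorem hasDerivAt_lyapunov {g : ℝ} (ha : HasDerivAt a (a t * m t) t)
    (hm : HasDerivAt m (1 / 2 * m t ^ 2 - 1 / 2 * a t ^ 2 + g) t) (hat : a t ≠ 0) :
    HasDerivAt (fun s => a s * c + c / a s * (1 + m s ^ 2))
      (c / a t * m t * (2 * g - 1)) t := by
  refine (ha.mul_const_add_div_mul_one_add_sq hm hat).congr_deriv ?_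
  field_simp
  ring

end LyapunovDerivative

theorem lyapunov_derivative_general
    (T : ℝ) (α M f : ℝ → ℝ → ℝ)
    (hα : ∀ t ∈ Set.Ico (0:ℝ) T, ∀ x : ℝ,
      HasDerivAt (fun s => α s x) (α t x * M t x) t)
    (hM : ∀ t ∈ Set.Ico (0:ℝ) T, ∀ x : ℝ,
      HasDerivAt (fun s => M s x)
        ((1 / 2) * (M t x) ^ 2 - (1 / 2) * (α t x) ^ 2 + f t x) t)
    (hsign : ∀ t ∈ Set.Ico (0:ℝ) T, ∀ x : ℝ, 0 < α t x * α 0 x)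
    (w : ℝ → ℝ → ℝ)
    (hw : ∀ t x, w t x = α t x * α 0 x + (α 0 x / α t x) * (1 + (M t x) ^ 2)) :
    ∀ t ∈ Set.Ico (0:ℝ) T, ∀ x : ℝ,
      HasDerivAt (fun s => w s x)
        ((α 0 x / α t x) * M t x * (2 * f t x - 1)) t := by
  intro t ht x
  have hαt : α t x ≠ 0 := left_ne_zero_of_mul (hsign t ht x).ne'
  simp only [hw]
  exact hasDerivAt_lyapunov (hα t ht x) (hM t ht x) hαt

/-- The Lyapunov computation of Theorem 5.1: if `∂_t α = αM`,
`∂_t M = (1/2)M² − (1/2)α² + f` with `|f| ≤ F` and `α(t,x)·α(0,x) > 0`, then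
`w = α·α₀ + (α₀/α)(1 + M²)` satisfies `∂_t w = (α₀/α)·M·(2f − 1)`. -/
theorem lyapunov_derivative
    (T F : ℝ) (α M f : ℝ → ℝ → ℝ)
    (hα : ∀ t ∈ Set.Ico (0:ℝ) T, ∀ x : ℝ,
      HasDerivAt (fun s => α s x) (α t x * M t x) t)
    (hM : ∀ t ∈ Set.Ico (0:ℝ) T, ∀ x : ℝ,
      HasDerivAt (fun s => M s x)
        ((1 / 2) * (M t x) ^ 2 - (1 / 2) * (α t x) ^ 2 + f t x) t)
    (hF : 0 ≤ F)
    (hf : ∀ t ∈ Set.Ico (0:ℝ) T, ∀ x : ℝ, |f t x| ≤ F)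
    (hsign : ∀ t ∈ Set.Ico (0:ℝ) T, ∀ x : ℝ, 0 < α t x * α 0 x)
    (w : ℝ → ℝ → ℝ)
    (hw : ∀ t x, w t x = α t x * α 0 x + (α 0 x / α t x) * (1 + (M t x) ^ 2)) :
    ∀ t ∈ Set.Ico (0:ℝ) T, ∀ x : ℝ,
      HasDerivAt (fun s => w s x)
        ((α 0 x / α t x) * M t x * (2 * f t x - 1)) t :=
  lyapunov_derivative_general T α M f hα hM hsign w hw
end

section
/- Let (u, ρ) be a smooth periodic solution of the μ-Hunter–Saxton system −u_{txx} = 2μ(u)u_x − 2u_x u_{xx} − u u_{xxx} + ρρ_x − γ₁ u_{xxx}, ρ_t = (ρu)_x + 2γ₂ ρ_x on S = R/Z. Then d/dt ∫_S (u_x² + ρ²) dx = 0, i.e. E(t) = ∫_S (u_x(t,x)² + ρ(t,x)²) dx is conserved. -/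
/-!
Differentiating under the integral sign, `E'(t) = ∫ 2 (u_x u_{tx} + ρ ρ_t) dx`. Multiplying the
first equation by `u` and the second by `ρ` shows that this integrand is the `x`-derivative of an
explicit expression in `u, u_x, u_{xx}, u_{tx}, ρ` (`energyFlux`), which is `1`-periodic; so its
integral over a period vanishes.
-/

open MeasureTheory intervalIntegral Function

lemma Function.Periodic.of_hasDerivAt {f f' : ℝ → ℝ} {c : ℝ} (hf : Periodic f c)
    (hd : ∀ x, HasDerivAt f (f' x) x) : Periodic f' c := by
  intro x
  have hshift : HasDerivAt f (f' (x + c)) x := hf.funext ▸ (hd (x + c)).comp_add_const x c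
  exact hshift.unique (hd x)

lemma periodic_of_hasDerivAt_param {f f' : ℝ → ℝ → ℝ} {c : ℝ}
    (hf : ∀ s, Periodic (f s) c) (hd : ∀ s x, HasDerivAt (f · x) (f' s x) s) (s : ℝ) :
    Periodic (f' s) c := by
  intro x
  have hshift : HasDerivAt (f · x) (f' s (x + c)) s := by
    simpa only [hf _ x] using hd s (x + c)
  exact hshift.unique (hd s x)

lemma Function.Periodic.intervalIntegral_eq_zero_of_hasDerivAt {E : Type*}
    [NormedAddCommGroup E] [NormedSpace ℝ E] [CompleteSpace E] {G g : ℝ → E} {c : ℝ}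
    (hG : Periodic G c) (hd : ∀ x, HasDerivAt G (g x) x) (a : ℝ)
    (hg : IntervalIntegrable g volume a (a + c)) :
    ∫ x in a..a + c, g x = 0 := by
  rw [integral_eq_sub_of_hasDerivAt (fun x _ => hd x) hg, hG a, sub_self]

lemma hasDerivAt_intervalIntegral_of_continuous {E : Type*}
    [NormedAddCommGroup E] [NormedSpace ℝ E] {F F' : ℝ → ℝ → E} {a b : ℝ}
    (hF : ∀ s, Continuous (F s)) (hF' : Continuous (uncurry F'))
    (hd : ∀ s x, HasDerivAt (F · x) (F' s x) s) (t : ℝ) :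
    HasDerivAt (fun s => ∫ x in a..b, F s x) (∫ x in a..b, F' t x) t := by
  obtain ⟨C, hC⟩ :
      ∃ C, ∀ p ∈ Metric.closedBall t 1 ×ˢ Set.uIcc a b, ‖uncurry F' p‖ ≤ C :=
    ((isCompact_closedBall t 1).prod isCompact_uIcc).exists_bound_of_continuousOn
      hF'.continuousOn
  refine (hasDerivAt_integral_of_dominated_loc_of_deriv_le (bound := fun _ => C)
    (Metric.ball_mem_nhds t one_pos) (.of_forall fun s => (hF s).aestronglyMeasurable)
    ((hF t).intervalIntegrable a b) (hF'.uncurry_left t).aestronglyMeasurable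
    (.of_forall fun x hx s hs => hC (s, x) ⟨Metric.ball_subset_closedBall hs,
      Set.uIoc_subset_uIcc hx⟩)
    intervalIntegrable_const (.of_forall fun x _ s _ => hd s x)).2

section EnergyFlux

variable (μ γ₁ γ₂ : ℝ) (u ux uxx uxxx v vx ρ ρx ρt : ℝ → ℝ)

/-- Here `v` stands for `u_{tx}`. -/
noncomputable def energyFlux (x : ℝ) : ℝ :=
  2 * (u x * v x + μ * u x ^ 2 - u x ^ 2 * uxx x + u x * ρ x ^ 2
    - γ₁ * (u x * uxx x - ux x ^ 2 / 2) + γ₂ * ρ x ^ 2)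

variable {u ux uxx v ρ}

lemma energyFlux_periodic {c : ℝ} (hu : Periodic u c) (hux : Periodic ux c)
    (huxx : Periodic uxx c) (hv : Periodic v c) (hρ : Periodic ρ c) :
    Periodic (energyFlux μ γ₁ γ₂ u ux uxx v ρ) c := by
  intro x
  simp only [energyFlux, hu x, hux x, huxx x, hv x, hρ x]

variable {uxxx vx ρx ρt}

lemma hasDerivAt_energyFlux {x : ℝ} (hu : HasDerivAt u (ux x) x)
    (hux : HasDerivAt ux (uxx x) x) (huxx : HasDerivAt uxx (uxxx x) x)
    (hv : HasDerivAt v (vx x) x) (hρ : HasDerivAt ρ (ρx x) x)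
    (hpde1 : -vx x = 2 * μ * ux x - 2 * ux x * uxx x - u x * uxxx x + ρ x * ρx x
      - γ₁ * uxxx x)
    (hpde2 : ρt x = ρx x * u x + ρ x * ux x + 2 * γ₂ * ρx x) :
    HasDerivAt (energyFlux μ γ₁ γ₂ u ux uxx v ρ)
      (2 * (ux x * v x) + 2 * (ρ x * ρt x)) x := by
  refine (((((((hu.mul hv).add ((hu.fun_pow 2).const_mul μ)).sub
    ((hu.fun_pow 2).mul huxx)).add (hu.mul (hρ.fun_pow 2))).sub
    (((hu.mul huxx).sub ((hux.fun_pow 2).div_const 2)).const_mul γ₁)).add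
    ((hρ.fun_pow 2).const_mul γ₂)).const_mul 2).congr_deriv ?_
  linear_combination (-2 * u x) * hpde1 + (-2 * ρ x) * hpde2

end EnergyFlux

theorem energy_conservation_general
    (γ₁ γ₂ : ℝ) (u ux uxx uxxx utx utxx ρ ρt ρx : ℝ → ℝ → ℝ)
    -- joint continuity (smoothness in the relevant variables)
    (hcux : Continuous (Function.uncurry ux))
    (hcutx : Continuous (Function.uncurry utx))
    (hcρ : Continuous (Function.uncurry ρ))
    (hcρt : Continuous (Function.uncurry ρt))
    -- spatial periodicity
    (hpu : ∀ t x : ℝ, u t (x + 1) = u t x)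
    (hpρ : ∀ t x : ℝ, ρ t (x + 1) = ρ t x)
    -- derivative relations
    (hux : ∀ t x : ℝ, HasDerivAt (fun y => u t y) (ux t x) x)
    (huxx : ∀ t x : ℝ, HasDerivAt (fun y => ux t y) (uxx t x) x)
    (huxxx : ∀ t x : ℝ, HasDerivAt (fun y => uxx t y) (uxxx t x) x)
    (hutx : ∀ t x : ℝ, HasDerivAt (fun s => ux s x) (utx t x) t)
    (hutxx : ∀ t x : ℝ, HasDerivAt (fun y => utx t y) (utxx t x) x)
    (hρt : ∀ t x : ℝ, HasDerivAt (fun s => ρ s x) (ρt t x) t)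
    (hρx : ∀ t x : ℝ, HasDerivAt (fun y => ρ t y) (ρx t x) x)
    -- the μ-Hunter–Saxton system
    (hpde1 : ∀ t x : ℝ,
      -(utxx t x) = 2 * (∫ y in (0:ℝ)..1, u t y) * ux t x
        - 2 * ux t x * uxx t x - u t x * uxxx t x + ρ t x * ρx t x - γ₁ * uxxx t x)
    (hpde2 : ∀ t x : ℝ,
      ρt t x = ρx t x * u t x + ρ t x * ux t x + 2 * γ₂ * ρx t x) :
    ∀ t : ℝ,
      HasDerivAt (fun s => ∫ x in (0:ℝ)..1, ((ux s x) ^ 2 + (ρ s x) ^ 2)) 0 t := by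
  intro t
  have hpux s : Periodic (ux s) 1 := Periodic.of_hasDerivAt (hpu s) (hux s)
  have hrate : Continuous (Function.uncurry fun s x =>
      2 * (ux s x * utx s x) + 2 * (ρ s x * ρt s x)) :=
    ((hcux.mul hcutx).const_mul 2).add ((hcρ.mul hcρt).const_mul 2)
  have hderiv := hasDerivAt_intervalIntegral_of_continuous (a := 0) (b := 1)
    (fun s => ((hcux.uncurry_left s).fun_pow 2).add ((hcρ.uncurry_left s).fun_pow 2)) hrate
    (fun s x => (((hutx s x).fun_pow 2).add ((hρt s x).fun_pow 2)).congr_deriv (by ring)) t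
  have hflux := (energyFlux_periodic (∫ y in (0:ℝ)..1, u t y) γ₁ γ₂ (hpu t) (hpux t)
    ((hpux t).of_hasDerivAt (huxx t)) (periodic_of_hasDerivAt_param hpux hutx t)
    (hpρ t)).intervalIntegral_eq_zero_of_hasDerivAt
    (fun x => hasDerivAt_energyFlux _ γ₁ γ₂ (hux t x) (huxx t x) (huxxx t x) (hutxx t x)
      (hρx t x) (hpde1 t x) (hpde2 t x)) 0
    ((hrate.uncurry_left t).intervalIntegrable _ _)
  rw [zero_add] at hflux
  rwa [hflux] at hderiv

/-- Energy conservation for the μ-Hunter–Saxton system: for a smooth 1-periodic solution of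
`−u_{txx} = 2μ(u)u_x − 2u_x u_{xx} − u u_{xxx} + ρρ_x − γ₁ u_{xxx}`,
`ρ_t = (ρu)_x + 2γ₂ ρ_x`, the energy `E(t) = ∫_S (u_x² + ρ²) dx` is conserved. -/
theorem energy_conservation
    (γ₁ γ₂ : ℝ) (u ux uxx uxxx utx utxx ρ ρt ρx : ℝ → ℝ → ℝ)
    -- joint continuity (smoothness in the relevant variables)
    (hcu : Continuous (Function.uncurry u))
    (hcux : Continuous (Function.uncurry ux))
    (hcuxx : Continuous (Function.uncurry uxx))
    (hcuxxx : Continuous (Function.uncurry uxxx))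
    (hcutx : Continuous (Function.uncurry utx))
    (hcutxx : Continuous (Function.uncurry utxx))
    (hcρ : Continuous (Function.uncurry ρ))
    (hcρt : Continuous (Function.uncurry ρt))
    (hcρx : Continuous (Function.uncurry ρx))
    -- spatial periodicity
    (hpu : ∀ t x : ℝ, u t (x + 1) = u t x)
    (hpρ : ∀ t x : ℝ, ρ t (x + 1) = ρ t x)
    -- derivative relations
    (hux : ∀ t x : ℝ, HasDerivAt (fun y => u t y) (ux t x) x)
    (huxx : ∀ t x : ℝ, HasDerivAt (fun y => ux t y) (uxx t x) x)
    (huxxx : ∀ t x : ℝ, HasDerivAt (fun y => uxx t y) (uxxx t x) x)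
    (hutx : ∀ t x : ℝ, HasDerivAt (fun s => ux s x) (utx t x) t)
    (hutxx : ∀ t x : ℝ, HasDerivAt (fun y => utx t y) (utxx t x) x)
    (hρt : ∀ t x : ℝ, HasDerivAt (fun s => ρ s x) (ρt t x) t)
    (hρx : ∀ t x : ℝ, HasDerivAt (fun y => ρ t y) (ρx t x) x)
    -- the μ-Hunter–Saxton system
    (hpde1 : ∀ t x : ℝ,
      -(utxx t x) = 2 * (∫ y in (0:ℝ)..1, u t y) * ux t x
        - 2 * ux t x * uxx t x - u t x * uxxx t x + ρ t x * ρx t x - γ₁ * uxxx t x)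
    (hpde2 : ∀ t x : ℝ,
      ρt t x = ρx t x * u t x + ρ t x * ux t x + 2 * γ₂ * ρx t x) :
    ∀ t : ℝ,
      HasDerivAt (fun s => ∫ x in (0:ℝ)..1, ((ux s x) ^ 2 + (ρ s x) ^ 2)) 0 t :=
  energy_conservation_general γ₁ γ₂ u ux uxx uxxx utx utxx ρ ρt ρx hcux hcutx hcρ hcρt hpu hpρ hux
    huxx huxxx hutx hutxx hρt hρx hpde1 hpde2
end
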